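/- arXiv:2103.09256 — 2 statements merged into one kernel-verified Lean document; each statement's English description precedes it below -/
import Mathlib

section
/- For all n ≥ 2, the burnt pancake network B_n has a Hamilton cycle: there exists a cyclic ordering of all 2^n·n! signed permutations of {1,…,n} in which every two consecutive signed permutations differ by a sign-complementing prefix reversal of some length 1 ≤ ℓ ≤ n. -/
/-!
Let `w₀ = []` and `wₙ₊₁ = (wₙ (n+1))^(2n+1) wₙ`, read as a sequence of prefix-reversal lengths.
By induction, `wₙ` takes a list of length `n` to its full sign-complementing reversal. Hence on a
list `q ++ [x]` of length `n + 1` the block `wₙ (n+1)` acts as the signed rotation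
`q ++ [x] ↦ -x :: q`, which has order `2(n+1)` and brings every entry and its negative to the
last position exactly once. Within each block, `wₙ` fixes the last entry and, by induction, visits
every signed arrangement of the other `n` entries exactly once; so the `2ⁿ·n!` lists visited by
`wₙ` are pairwise distinct and exhaust the signed arrangements of the start. Since `wₙ` ends at
the full reversal of the start, one more reversal of length `n` closes the cycle.
-/

/-- `p` is a signed permutation of `{1,…,n}`: a list of nonzero integers whose
absolute values form a permutation of `{1,…,n}`. -/
def IsSignedPerm (n : ℕ) (p : List ℤ) : Prop :=
  (p.map Int.natAbs).Perm ((List.range n).map (· + 1)) ∧ ∀ x ∈ p, x ≠ 0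

/-- The sign-complementing prefix reversal of length `ℓ`: reverse the order and negate
the sign of the first `ℓ` entries. -/
def signedPrefixRev (ℓ : ℕ) (p : List ℤ) : List ℤ :=
  (p.take ℓ).reverse.map (fun x => -x) ++ p.drop ℓ

theorem Function.iterate_eq_iterate_of_eqOn {α : Type*} {f g : α → α} {s : Set α}
    (hs : Set.MapsTo g s s) (h : Set.EqOn f g s) {a : α} (ha : a ∈ s) (k : ℕ) :
    f^[k] a = g^[k] a := by
  induction k generalizing a with
  | zero => rfl
  | succ k ih => rw [Function.iterate_succ_apply, Function.iterate_succ_apply, h ha, ih (hs ha)]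

theorem List.iterate_eq_iterate_of_eqOn {α : Type*} {f g : α → α} {s : Set α}
    (hs : Set.MapsTo g s s) (h : Set.EqOn f g s) {a : α} (ha : a ∈ s) (k : ℕ) :
    List.iterate f a k = List.iterate g a k :=
  List.ext_getElem (by simp) fun i _ _ => by
    simp only [List.getElem_iterate, Function.iterate_eq_iterate_of_eqOn hs h ha]

theorem List.dropLast_scanl_append_foldl {α β : Type*} (f : β → α → β) (b : β) (l : List α) :
    (l.scanl f b).dropLast ++ [l.foldl f b] = l.scanl f b := by
  rw [← List.getLast_scanl List.scanl_ne_nil, List.dropLast_append_getLast]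

theorem List.scanl_append_eq_dropLast_append {α β : Type*} (f : β → α → β) (b : β)
    (u v : List α) : (u ++ v).scanl f b = (u.scanl f b).dropLast ++ v.scanl f (u.foldl f b) := by
  have hv : v.scanl f (u.foldl f b) = u.foldl f b :: (v.scanl f (u.foldl f b)).tail := by
    cases v <;> simp
  rw [List.scanl_append, hv]
  nth_rw 1 [← List.dropLast_scanl_append_foldl f b u]
  simp

theorem List.exists_mem_cons_getD_scanl_succ_mod {α β : Type*} {f : β → α → β} {b : β}
    {w : List α} {ℓ₀ : α} (hclose : f (w.foldl f b) ℓ₀ = b) (d : β) :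
    ∀ i < (w.scanl f b).length, ∃ ℓ ∈ ℓ₀ :: w,
      (w.scanl f b).getD ((i + 1) % (w.scanl f b).length) d = f ((w.scanl f b).getD i d) ℓ := by
  intro i hi
  rw [List.length_scanl] at hi ⊢
  rcases Nat.lt_or_ge (i + 1) (w.length + 1) with hlt | hge
  · refine ⟨w[i], List.mem_cons_of_mem _ (List.getElem_mem _), ?_⟩
    rw [Nat.mod_eq_of_lt hlt, List.getD_eq_getElem _ _ (by simpa using hlt),
      List.getD_eq_getElem _ _ (by simpa using hi), List.getElem_succ_scanl]
  · obtain rfl : i = w.length := by omega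
    refine ⟨ℓ₀, List.mem_cons_self, ?_⟩
    rw [Nat.mod_self, List.getD_eq_getElem _ _ (by simp), List.getElem_scanl_zero,
      List.getD_eq_getElem _ _ (by simp), List.getElem_scanl, List.take_length, hclose]

theorem length_signedPrefixRev (ℓ : ℕ) (p : List ℤ) :
    (signedPrefixRev ℓ p).length = p.length := by
  simp only [signedPrefixRev, List.length_append, List.length_map, List.length_reverse,
    List.length_take, List.length_drop]
  omega

theorem signedPrefixRev_append_of_le {ℓ : ℕ} {p : List ℤ} (s : List ℤ) (h : ℓ ≤ p.length) :
    signedPrefixRev ℓ (p ++ s) = signedPrefixRev ℓ p ++ s := by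
  simp [signedPrefixRev, List.take_append_of_le_length h, List.drop_append_of_le_length h]

theorem signedPrefixRev_involutive (ℓ : ℕ) : Function.Involutive (signedPrefixRev ℓ) := by
  intro p
  rcases le_total ℓ p.length with h | h
  · have hA : ((p.take ℓ).reverse.map (fun x => -x)).length = ℓ := by simpa using h
    rw [signedPrefixRev, signedPrefixRev, List.take_left' hA, List.drop_left' hA]
    simp [List.map_reverse]
  · simp [signedPrefixRev, List.take_of_length_le h, List.drop_of_length_le h, List.map_reverse,
      List.take_of_length_le (l := p.reverse) (by simpa using h),
      List.drop_of_length_le (l := (p.map _).reverse) (by simpa using h)]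

theorem signedPrefixRev_succ_append_singleton {ℓ : ℕ} {q : List ℤ} (hq : q.length = ℓ) (x : ℤ) :
    signedPrefixRev (ℓ + 1) (signedPrefixRev ℓ q ++ [x]) = -x :: q := by
  subst hq
  simp [signedPrefixRev, List.map_reverse, List.take_of_length_le, List.drop_of_length_le]

def applyRevs (w : List ℕ) (p : List ℤ) : List ℤ :=
  w.foldl (fun q ℓ => signedPrefixRev ℓ q) p

def revTrace (w : List ℕ) (p : List ℤ) : List (List ℤ) :=
  w.scanl (fun q ℓ => signedPrefixRev ℓ q) p

theorem applyRevs_append_of_le {w : List ℕ} {p : List ℤ} (s : List ℤ)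
    (h : ∀ ℓ ∈ w, ℓ ≤ p.length) : applyRevs w (p ++ s) = applyRevs w p ++ s := by
  induction w generalizing p with
  | nil => rfl
  | cons ℓ w ih =>
    simp only [applyRevs, List.foldl_cons] at ih ⊢
    rw [signedPrefixRev_append_of_le s (h ℓ List.mem_cons_self), ih]
    exact fun ℓ' hℓ' => (length_signedPrefixRev ℓ p).symm ▸ h ℓ' (List.mem_cons_of_mem _ hℓ')

theorem revTrace_append_of_le {w : List ℕ} {p : List ℤ} (s : List ℤ)
    (h : ∀ ℓ ∈ w, ℓ ≤ p.length) : revTrace w (p ++ s) = (revTrace w p).map (· ++ s) := by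
  induction w generalizing p with
  | nil => rfl
  | cons ℓ w ih =>
    simp only [revTrace, List.scanl_cons, List.map_cons] at ih ⊢
    rw [signedPrefixRev_append_of_le s (h ℓ List.mem_cons_self), ih]
    exact fun ℓ' hℓ' => (length_signedPrefixRev ℓ p).symm ▸ h ℓ' (List.mem_cons_of_mem _ hℓ')

theorem applyRevs_replicate_flatten (w : List ℕ) (m k : ℕ) (p : List ℤ) :
    applyRevs (List.replicate k (w ++ [m])).flatten p
      = (fun q => signedPrefixRev m (applyRevs w q))^[k] p := by
  induction k generalizing p with
  | zero => rfl
  | succ k ih =>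
    rw [List.replicate_succ, List.flatten_cons, Function.iterate_succ_apply, ← ih]
    simp [applyRevs, List.foldl_append]

theorem revTrace_replicate_flatten_append (w : List ℕ) (m k : ℕ) (p : List ℤ) :
    revTrace ((List.replicate k (w ++ [m])).flatten ++ w) p
      = (List.iterate (fun q => signedPrefixRev m (applyRevs w q)) p (k + 1)).flatMap
          (revTrace w) := by
  induction k generalizing p with
  | zero => simp [List.iterate]
  | succ k ih =>
    have hblock : (revTrace (w ++ [m]) p).dropLast = revTrace w p := by
      rw [revTrace, List.scanl_append_eq_dropLast_append]
      simp [revTrace, List.dropLast_append_of_ne_nil, List.dropLast_scanl_append_foldl]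
    rw [List.replicate_succ, List.flatten_cons, List.append_assoc, revTrace,
      List.scanl_append_eq_dropLast_append, ← revTrace, hblock, ← revTrace, ih]
    simp [applyRevs, List.iterate, List.foldl_append]

def signedRotate (q : List ℤ) : List ℤ :=
  (q.getLast?.map (fun x => -x)).toList ++ q.dropLast

@[simp]
theorem signedRotate_append_singleton (q : List ℤ) (x : ℤ) :
    signedRotate (q ++ [x]) = -x :: q := by
  simp [signedRotate]

theorem mapsTo_signedRotate (m : ℕ) :
    Set.MapsTo signedRotate {r | r.length = m} {r | r.length = m} := by
  intro r hr
  rcases List.eq_nil_or_concat' r with rfl | ⟨q, x, rfl⟩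
  · exact hr
  · simpa using hr

theorem map_natAbs_signedRotate_perm (q : List ℤ) :
    ((signedRotate q).map Int.natAbs).Perm (q.map Int.natAbs) := by
  rcases List.eq_nil_or_concat' q with rfl | ⟨q, x, rfl⟩
  · rfl
  · simpa using (List.perm_append_singleton _ _).symm

theorem map_natAbs_perm_of_mem_iterate_signedRotate {p r : List ℤ} {k : ℕ}
    (hr : r ∈ List.iterate signedRotate p k) : (r.map Int.natAbs).Perm (p.map Int.natAbs) := by
  obtain ⟨i, -, rfl⟩ := List.mem_iterate.1 hr
  clear hr
  induction i with
  | zero => rfl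
  | succ i ih => rw [Function.iterate_succ_apply']; exact (map_natAbs_signedRotate_perm _).trans ih

theorem length_of_mem_iterate_signedRotate {p r : List ℤ} {k : ℕ}
    (hr : r ∈ List.iterate signedRotate p k) : r.length = p.length := by
  simpa using (map_natAbs_perm_of_mem_iterate_signedRotate hr).length_eq

theorem signedRotate_iterate_append (u v : List ℤ) :
    signedRotate^[v.length] (u ++ v) = v.map (fun x => -x) ++ u := by
  induction v using List.reverseRecOn generalizing u with
  | nil => simp
  | append_singleton v x ih =>
    rw [List.length_append, List.length_singleton, Function.iterate_succ_apply,
      ← List.append_assoc, signedRotate_append_singleton, ← List.cons_append, ih]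
    simp

theorem signedRotate_iterate_length (p : List ℤ) :
    signedRotate^[p.length] p = p.map (fun x => -x) := by
  simpa using signedRotate_iterate_append [] p

theorem map_getLastD_iterate_signedRotate (u v : List ℤ) :
    (List.iterate signedRotate (v ++ u) u.length).map (·.getLastD 0) = u.reverse := by
  induction u using List.reverseRecOn generalizing v with
  | nil => rfl
  | append_singleton u x ih =>
    rw [List.length_append, List.length_singleton, List.iterate, List.map_cons,
      ← List.append_assoc, signedRotate_append_singleton, ← List.cons_append, ih]
    simp

theorem map_getLastD_iterate_signedRotate_two_mul (p : List ℤ) :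
    (List.iterate signedRotate p (2 * p.length)).map (·.getLastD 0)
      = (p.map (fun x => -x) ++ p).reverse := by
  have h := map_getLastD_iterate_signedRotate p []
  have h' := map_getLastD_iterate_signedRotate (p.map fun x => -x) []
  rw [List.nil_append] at h h'
  rw [two_mul, List.iterate_add, List.map_append, signedRotate_iterate_length, h,
    ← List.length_map (f := fun x : ℤ => -x), h', List.reverse_append]

theorem nodup_map_neg_append_self {p : List ℤ} (h0 : 0 ∉ p) (hnd : (p.map Int.natAbs).Nodup) :
    (p.map (fun x => -x) ++ p).Nodup := by
  have hp : p.Nodup := hnd.of_map _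
  refine List.nodup_append.2 ⟨hp.map neg_injective, hp, ?_⟩
  intro a ha b hb hab
  obtain ⟨x, hx, rfl⟩ := List.mem_map.1 ha
  subst hab
  have : -x = x := List.inj_on_of_nodup_map hnd hb hx (Int.natAbs_neg x)
  exact h0 (by rwa [show x = 0 by omega] at hx)

theorem signedPrefixRev_applyRevs_eq_signedRotate {n : ℕ} {w : List ℕ}
    (hw : ∀ q : List ℤ, q.length = n → applyRevs w q = signedPrefixRev n q)
    (hwle : ∀ ℓ ∈ w, ℓ ≤ n) {r : List ℤ} (hr : r.length = n + 1) :
    signedPrefixRev (n + 1) (applyRevs w r) = signedRotate r := by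
  obtain ⟨q, x, rfl⟩ := (List.eq_nil_or_concat' r).resolve_left (by rintro rfl; simp at hr)
  have hq : q.length = n := by simpa using hr
  rw [applyRevs_append_of_le _ (hq ▸ hwle), hw q hq, signedPrefixRev_succ_append_singleton hq,
    signedRotate_append_singleton]

def cycleWord : ℕ → List ℕ
  | 0 => []
  | n + 1 => (List.replicate (2 * n + 1) (cycleWord n ++ [n + 1])).flatten ++ cycleWord n

theorem mem_cycleWord {n ℓ : ℕ} (h : ℓ ∈ cycleWord n) : 1 ≤ ℓ ∧ ℓ ≤ n := by
  induction n with
  | zero => simp [cycleWord] at h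
  | succ n ih =>
    simp only [cycleWord, List.mem_append, List.mem_flatten, List.mem_replicate] at h
    rcases h with ⟨_, ⟨-, rfl⟩, h⟩ | h
    · rcases List.mem_append.1 h with h | h
      · have := ih h; omega
      · simp at h; omega
    · have := ih h; omega

theorem length_cycleWord_add_one (n : ℕ) : (cycleWord n).length + 1 = 2 ^ n * n.factorial := by
  induction n with
  | zero => rfl
  | succ n ih =>
    rw [show 2 ^ (n + 1) * (n + 1).factorial = 2 * (n + 1) * (2 ^ n * n.factorial) by
      rw [pow_succ, Nat.factorial_succ]; ring, ← ih]
    simp only [cycleWord, List.length_append, List.length_flatten, List.map_replicate,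
      List.sum_replicate, List.length_singleton, smul_eq_mul]
    ring

theorem applyRevs_cycleWord {n : ℕ} {p : List ℤ} (hp : p.length = n) :
    applyRevs (cycleWord n) p = signedPrefixRev n p := by
  induction n generalizing p with
  | zero => simp [List.length_eq_zero_iff.1 hp, cycleWord, applyRevs, signedPrefixRev]
  | succ n ih =>
    obtain ⟨a, q, rfl⟩ : ∃ a q, p = a :: q := List.exists_cons_of_length_eq_add_one hp
    have hq : q.length = n := by simpa using hp
    have hstep : Set.EqOn (fun r => signedPrefixRev (n + 1) (applyRevs (cycleWord n) r))
        signedRotate {r | r.length = n + 1} := fun r hr =>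
      signedPrefixRev_applyRevs_eq_signedRotate (fun _ => ih) (fun ℓ h => (mem_cycleWord h).2) hr
    have hrot : signedRotate^[2 * n + 1] (a :: q) = q ++ [-a] := by
      rw [show 2 * n + 1 = q.length + (n + 1) by omega, Function.iterate_add_apply,
        show n + 1 = (a :: q).length by simp [hq], signedRotate_iterate_length, List.map_cons,
        ← List.singleton_append, ← List.length_map (f := fun x : ℤ => -x),
        signedRotate_iterate_append]
      simp
    rw [cycleWord, applyRevs, List.foldl_append, ← applyRevs, ← applyRevs,
      applyRevs_replicate_flatten,
      Function.iterate_eq_iterate_of_eqOn (mapsTo_signedRotate _) hstep hp, hrot,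
      applyRevs_append_of_le _ (fun ℓ h => hq ▸ (mem_cycleWord h).2), ih hq]
    simp [signedPrefixRev, List.map_reverse, ← hq]

theorem revTrace_cycleWord_succ {n : ℕ} {p : List ℤ} (hp : p.length = n + 1) :
    revTrace (cycleWord (n + 1)) p = (List.iterate signedRotate p (2 * (n + 1))).flatMap
      fun r => (revTrace (cycleWord n) r.dropLast).map (· ++ [r.getLastD 0]) := by
  have hstep : Set.EqOn (fun r => signedPrefixRev (n + 1) (applyRevs (cycleWord n) r))
      signedRotate {r | r.length = n + 1} := fun r hr =>
    signedPrefixRev_applyRevs_eq_signedRotate (fun _ => applyRevs_cycleWord)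
      (fun ℓ h => (mem_cycleWord h).2) hr
  rw [cycleWord, revTrace_replicate_flatten_append,
    List.iterate_eq_iterate_of_eqOn (mapsTo_signedRotate _) hstep hp,
    show 2 * n + 1 + 1 = 2 * (n + 1) by ring]
  refine List.flatMap_congr fun r hr => ?_
  have hrl : r.length = n + 1 := (length_of_mem_iterate_signedRotate hr).trans hp
  obtain ⟨q, x, rfl⟩ := (List.eq_nil_or_concat' r).resolve_left (by rintro rfl; simp at hrl)
  have hq : q.length = n := by simpa using hrl
  rw [List.dropLast_concat, List.getLastD_concat,
    revTrace_append_of_le _ (fun ℓ h => hq ▸ (mem_cycleWord h).2)]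

theorem nodup_revTrace_cycleWord {n : ℕ} {p : List ℤ} (hp : p.length = n) (h0 : 0 ∉ p)
    (hnd : (p.map Int.natAbs).Nodup) : (revTrace (cycleWord n) p).Nodup := by
  induction n generalizing p with
  | zero => simp [List.length_eq_zero_iff.1 hp, cycleWord, revTrace]
  | succ n ih =>
    rw [revTrace_cycleWord_succ hp, List.nodup_flatMap]
    constructor
    · intro r hr
      have hperm := map_natAbs_perm_of_mem_iterate_signedRotate hr
      have hr0 : 0 ∉ r := fun h => by
        obtain ⟨y, hy, hy0⟩ := List.mem_map.1 (hperm.subset (List.mem_map_of_mem h))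
        exact h0 (Int.natAbs_eq_zero.1 hy0 ▸ hy)
      refine (ih ?_ (fun h => hr0 (List.dropLast_subset r h))
        ((hperm.nodup_iff.2 hnd).sublist ((List.dropLast_sublist r).map _))).map
        (List.append_left_injective _)
      rw [List.length_dropLast, length_of_mem_iterate_signedRotate hr, hp, Nat.add_sub_cancel]
    · have hlast : ((List.iterate signedRotate p (2 * (n + 1))).map (·.getLastD 0)).Nodup := by
        rw [← hp, map_getLastD_iterate_signedRotate_two_mul]
        exact List.nodup_reverse.2 (nodup_map_neg_append_self h0 hnd)
      refine (List.pairwise_map.1 hlast).imp fun hrs => List.disjoint_left.2 fun q hq hq' => ?_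
      obtain ⟨a, -, rfl⟩ := List.mem_map.1 hq
      obtain ⟨b, -, hb⟩ := List.mem_map.1 hq'
      exact hrs (by simpa using (congrArg (·.getLastD 0) hb).symm)

theorem mem_revTrace_cycleWord {n : ℕ} {p q : List ℤ} (hp : p.length = n)
    (hq : (q.map Int.natAbs).Perm (p.map Int.natAbs)) : q ∈ revTrace (cycleWord n) p := by
  induction n generalizing p q with
  | zero =>
    obtain rfl := List.length_eq_zero_iff.1 hp
    obtain rfl : q = [] := by simpa using hq
    simp [cycleWord, revTrace]
  | succ n ih =>
    have hql : q.length = n + 1 := by simpa [hp] using hq.length_eq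
    obtain ⟨q, x, rfl⟩ := (List.eq_nil_or_concat' q).resolve_left (by rintro rfl; simp at hql)
    have hx : x ∈ (p.map (fun x => -x) ++ p).reverse := by
      obtain ⟨y, hy, hxy⟩ := List.mem_map.1 (hq.subset (by simp : x.natAbs ∈ _))
      rcases Int.natAbs_eq_natAbs_iff.1 hxy with rfl | rfl <;> simp [hy]
    rw [← map_getLastD_iterate_signedRotate_two_mul, hp] at hx
    obtain ⟨r, hr, hrx⟩ := List.mem_map.1 hx
    have hrl : r.length = n + 1 := (length_of_mem_iterate_signedRotate hr).trans hp
    obtain ⟨r, y, rfl⟩ := (List.eq_nil_or_concat' r).resolve_left (by rintro rfl; simp at hrl)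
    obtain rfl : x = y := by simpa using hrx.symm
    have hperm : (q.map Int.natAbs).Perm (r.map Int.natAbs) := by
      have := hq.trans (map_natAbs_perm_of_mem_iterate_signedRotate hr).symm
      simpa only [List.map_append, List.map_singleton, List.perm_append_right_iff] using this
    rw [revTrace_cycleWord_succ hp]
    refine List.mem_flatMap.2 ⟨r ++ [x], hr, List.mem_map.2 ⟨q, ?_, by simp⟩⟩
    rw [List.dropLast_concat]
    exact ih (by simpa using hrl) hperm

/-- For `n ≥ 2`, the burnt pancake network `B_n` has a Hamilton
cycle: there is a cyclic ordering of all `2ⁿ·n!` signed permutations of `{1,…,n}` in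
which every two consecutive ones differ by a sign-complementing prefix reversal of some
length `1 ≤ ℓ ≤ n`. -/
theorem burnt_pancake_hamilton (n : ℕ) (hn : 2 ≤ n) :
    ∃ L : List (List ℤ),
      L.length = 2 ^ n * n.factorial ∧
      (∀ p, IsSignedPerm n p → L.count p = 1) ∧
      ∀ i < L.length, ∃ ℓ, 1 ≤ ℓ ∧ ℓ ≤ n ∧
        L.getD ((i + 1) % L.length) [] = signedPrefixRev ℓ (L.getD i []) := by
  set p₀ : List ℤ := ((List.range n).map (· + 1)).map ((↑) : ℕ → ℤ)
  have hp₀ : p₀.map Int.natAbs = (List.range n).map (· + 1) := by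
    rw [List.map_map]; exact List.map_id'' Int.natAbs_natCast _
  have hlen : p₀.length = n := by simp [p₀]
  have hnd : (p₀.map Int.natAbs).Nodup := hp₀ ▸ List.nodup_range.map (fun _ _ => Nat.succ_inj.1)
  have hclose : signedPrefixRev n (applyRevs (cycleWord n) p₀) = p₀ := by
    rw [applyRevs_cycleWord hlen, signedPrefixRev_involutive]
  refine ⟨revTrace (cycleWord n) p₀, ?_, fun q hq => ?_, fun i hi => ?_⟩
  · rw [revTrace, List.length_scanl, length_cycleWord_add_one]
  · exact List.count_eq_one_of_mem (nodup_revTrace_cycleWord hlen (by simp [p₀]; omega) hnd)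
      (mem_revTrace_cycleWord hlen (hp₀ ▸ hq.1))
  · obtain ⟨ℓ, hℓ, h⟩ := List.exists_mem_cons_getD_scanl_succ_mod hclose [] i hi
    rcases List.mem_cons.1 hℓ with rfl | hℓ
    · exact ⟨ℓ, by omega, le_rfl, h⟩
    · exact ⟨ℓ, (mem_cycleWord hℓ).1, (mem_cycleWord hℓ).2, h⟩
end

section
/- Let n ≥ 2, k ≥ 1, and for π ∈ CPERMS(n,k) let RANK_n(π) denote the 1-indexed position of π in the listing Rec(1^0 2^0 ⋯ n^0, k). Then for π = p_1 p_2 ⋯ p_n with p_i = v_i^{c_i}, RANK_n(π) = (n·(c_n + 1) − v_n)·k^{n−1}·(n−1)! + RANK_{n−1}(q_1 q_2 ⋯ q_{n−1}), where q_i = (v'_i)^{c'_i} with v'_i = (v_i − v_n) mod n (which lies in {1,…,n−1} since v_i ≠ v_n), c'_i = (c_i − c_n) mod k if v_i < v_n, and c'_i = (c_i − c_n − 1) mod k if v_i > v_n; the base case is RANK_1(v^c) = c + 1. -/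
/-- Increment the colour of every symbol of a coloured pre-permutation by `s`, modulo `k`. -/
def colShift (k s : ℕ) (p : List (ℕ × ℕ)) : List (ℕ × ℕ) :=
  p.map (fun x => (x.1, (x.2 + s) % k))

/-- The colour-incrementing prefix-reversal of length `j` (a "flip"):
reverse the first `j` symbols and increment their colours by 1 modulo `k`. -/
def cflip (k j : ℕ) (p : List (ℕ × ℕ)) : List (ℕ × ℕ) :=
  colShift k 1 (p.take j).reverse ++ p.drop j

/-- `p` is a `k`-coloured permutation of order `n`: its values are a permutation
of `{1,…,n}` and all its colours lie in `{0,…,k-1}`. -/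
def IsCPerm (n k : ℕ) (p : List (ℕ × ℕ)) : Prop :=
  (p.map Prod.fst).Perm ((List.range n).map (· + 1)) ∧ ∀ x ∈ p, x.2 < k

/-- `p` is a pre-perm: distinct values from `{1,…,n}`, colours in `{0,…,k-1}`. -/
def IsPrePerm (n k : ℕ) (p : List (ℕ × ℕ)) : Prop :=
  (p.map Prod.fst).Nodup ∧ ∀ x ∈ p, (1 ≤ x.1 ∧ x.1 ≤ n) ∧ x.2 < k

/-- The circular string `ρ(p) = p^{+(k-1)} · p^{+(k-2)} ⋯ p^{+0}`. -/
def rho (k : ℕ) (p : List (ℕ × ℕ)) : List (ℕ × ℕ) :=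
  ((List.range k).reverse).flatMap (fun s => colShift k s p)

/-- `ρ(p)_i`: the length `j-1` contiguous subword of the circular string `ρ(p)`
ending with `r_{i-1}` (1-based indices modulo `m = k·j`, where `j = p.length`). -/
def rhoSub (k : ℕ) (p : List (ℕ × ℕ)) (i : ℕ) : List (ℕ × ℕ) :=
  (List.range (p.length - 1)).map
    (fun t => (rho k p).getD ((i + t + k * p.length - p.length) % (k * p.length)) (0, 0))

/-- Fuel-indexed version of the recursive listing `Rec(p,k)`; `fuel = p.length`. -/
def RecAux (k : ℕ) : ℕ → List (ℕ × ℕ) → List (List (ℕ × ℕ))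
  | 0, p => (List.range k).map (fun s => colShift k s p)
  | fuel + 1, p =>
    if p.length ≤ 1 then (List.range k).map (fun s => colShift k s p)
    else ((List.range (k * p.length)).reverse).flatMap
      (fun i => (RecAux k fuel (rhoSub k p (i + 1))).map (fun q => q ++ [(rho k p).getD i (0, 0)]))

/-- The recursive listing `Rec(p,k)`:
`Rec(p₁,k) = p₁, p₁^{+1}, …, p₁^{+(k-1)}` when `p` has length 1, and
`Rec(p,k) = Rec(ρ(p)_m,k)·r_m, Rec(ρ(p)_{m-1},k)·r_{m-1}, …, Rec(ρ(p)_1,k)·r_1` otherwise. -/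
def RecList (k : ℕ) (p : List (ℕ × ℕ)) : List (List (ℕ × ℕ)) :=
  RecAux k p.length p

/-- The identity coloured permutation `1⁰2⁰⋯n⁰`. -/
def idPerm (n : ℕ) : List (ℕ × ℕ) := (List.range n).map (fun i => (i + 1, 0))

/-- `rankL k n π`: the 1-indexed position of `π` in the listing `Rec(1⁰2⁰⋯n⁰, k)`. -/
def rankL (k n : ℕ) (π : List (ℕ × ℕ)) : ℕ :=
  (RecList k (idPerm n)).idxOf π + 1

/-!
`Rec(1⁰⋯n⁰,k)` is the concatenation of `k·n` blocks `Rec(ρ_{i+1},k)·r_i`, each of length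
`k^{n-1}(n-1)!`, taken for `i = kn-1, …, 0`. Every block lists all coloured arrangements of its
values, so `π` lies in the unique block whose symbol `r_i` is its last symbol `v^c`, namely
`i = (k-1-c)n + v - 1`, and `n(c+1) - v` blocks precede it. The window `ρ_{i+1}` is
`(v+1)^{c+1} ⋯ n^{c+1} 1^c ⋯ (v-1)^c`, which the relabelling `x ↦ x'` turns into `1⁰⋯(n-1)⁰`.
Since `Rec` commutes with every symbol map that commutes with the colour shifts, and the
relabelling is injective on coloured symbols, the position of `π` inside its block is
`RANK_{n-1}` of the relabelled prefix.
-/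

namespace List

variable {α β : Type*}

theorem idxOf_map_of_injOn [BEq α] [LawfulBEq α] [BEq β] [LawfulBEq β] {f : α → β} {s : Set α}
    (hf : Set.InjOn f s) {l : List α} (hl : ∀ b ∈ l, b ∈ s) {a : α} (ha : a ∈ s) :
    (l.map f).idxOf (f a) = l.idxOf a := by
  induction l with
  | nil => rfl
  | cons b l ih =>
    have ih := ih fun c hc => hl c (mem_cons_of_mem b hc)
    by_cases hb : b = a
    · simp [hb]
    · have hfb : f b ≠ f a := fun h => hb (hf (hl b mem_cons_self) ha h)
      simp [idxOf_cons_ne _ hb, idxOf_cons_ne _ hfb, ih]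

theorem injOn_map {f : α → β} {s : Set α} (hf : Set.InjOn f s) :
    Set.InjOn (map f) {l | ∀ x ∈ l, x ∈ s} := by
  intro a ha b hb hab
  induction a generalizing b with
  | nil => exact (map_eq_nil_iff.mp hab.symm).symm
  | cons x a ih =>
    obtain _ | ⟨y, b⟩ := b
    · simp at hab
    simp only [map_cons, cons.injEq] at hab
    simp only [Set.mem_ofPred_eq, mem_cons, forall_eq_or_imp] at ha hb
    rw [hf ha.1 hb.1 hab.1, ih ha.2 hb.2 hab.2]

theorem idxOf_flatMap_range_reverse [BEq α] [LawfulBEq α] {B : ℕ → List α} {ℓ N i₀ : ℕ}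
    {a : α} (hlen : ∀ i < N, (B i).length = ℓ) (hi₀ : i₀ < N) (ha : a ∈ B i₀)
    (huniq : ∀ i < N, a ∈ B i → i = i₀) :
    ((range N).reverse.flatMap B).idxOf a = (N - 1 - i₀) * ℓ + (B i₀).idxOf a := by
  induction N with
  | zero => omega
  | succ N ih =>
    rw [range_succ, reverse_append, reverse_singleton, singleton_append, flatMap_cons]
    by_cases hN : i₀ = N
    · subst hN
      simp [idxOf_append_of_mem ha]
    · have haN : a ∉ B N := fun h => hN (huniq N (by omega) h).symm
      rw [idxOf_append_of_notMem haN, hlen N (by omega),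
        ih (fun i hi => hlen i (by omega)) (by omega) (fun i hi => huniq i (by omega))]
      rw [show N + 1 - 1 - i₀ = N - 1 - i₀ + 1 by omega]
      ring

theorem getD_flatMap_range_reverse {B : ℕ → List α} {ℓ N t : ℕ} (d : α)
    (hlen : ∀ i, (B i).length = ℓ) (ht : t < N * ℓ) :
    ((range N).reverse.flatMap B).getD t d = (B (N - 1 - t / ℓ)).getD (t % ℓ) d := by
  induction N generalizing t with
  | zero => simp at ht
  | succ N ih =>
    rw [Nat.succ_mul] at ht
    rw [range_succ, reverse_append, reverse_singleton, singleton_append, flatMap_cons]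
    by_cases htℓ : t < ℓ
    · rw [getD_append _ _ _ _ (by rwa [hlen]), Nat.div_eq_of_lt htℓ, Nat.mod_eq_of_lt htℓ]
      simp
    · have hℓ : 0 < ℓ := Nat.pos_of_ne_zero (by rintro rfl; simp at ht)
      rw [getD_append_right _ _ _ _ (by rw [hlen]; omega), hlen, ih (by omega)]
      obtain ⟨u, rfl⟩ : ∃ u, t = u + ℓ := ⟨t - ℓ, by omega⟩
      rw [Nat.add_sub_cancel, Nat.add_div_right _ hℓ, Nat.add_mod_right]
      congr 2
      have : u / ℓ < N := (Nat.div_lt_iff_lt_mul hℓ).mpr (by omega)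
      omega

end List

@[simp] theorem length_colShift (k s : ℕ) (p : List (ℕ × ℕ)) :
    (colShift k s p).length = p.length := by
  simp [colShift]

@[simp] theorem length_rho (k : ℕ) (p : List (ℕ × ℕ)) : (rho k p).length = k * p.length := by
  simp [rho, List.length_flatMap, List.map_const']

@[simp] theorem length_rhoSub (k i : ℕ) (p : List (ℕ × ℕ)) :
    (rhoSub k p i).length = p.length - 1 := by
  simp [rhoSub]

theorem getElem_rhoSub (k i : ℕ) (p : List (ℕ × ℕ)) {t : ℕ} (ht : t < (rhoSub k p i).length) :
    (rhoSub k p i)[t] =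
      (rho k p).getD ((i + t + k * p.length - p.length) % (k * p.length)) (0, 0) := by
  simp [rhoSub]

/-- `ρ(p)` consists of `k` blocks of length `p.length`, block `b` being `p^{+(k-1-b)}`. -/
theorem getD_rho (k : ℕ) (p : List (ℕ × ℕ)) {t : ℕ} (ht : t < k * p.length) :
    (rho k p).getD t (0, 0) =
      ((p.getD (t % p.length) (0, 0)).1,
        ((p.getD (t % p.length) (0, 0)).2 + (k - 1 - t / p.length)) % k) := by
  have hj : 0 < p.length := Nat.pos_of_ne_zero (by rintro h; simp [h] at ht)
  have hr : t % p.length < p.length := Nat.mod_lt _ hj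
  rw [rho, List.getD_flatMap_range_reverse _ (length_colShift k · p) ht,
    List.getD_eq_getElem _ _ (by simpa using hr), List.getD_eq_getElem _ _ hr]
  simp [colShift]

theorem fst_getD_rho_mod (k : ℕ) (p : List (ℕ × ℕ)) (hk : 0 < k) (hp : 0 < p.length) (T : ℕ) :
    ((rho k p).getD (T % (k * p.length)) (0, 0)).1 = (p.getD (T % p.length) (0, 0)).1 := by
  rw [getD_rho k p (Nat.mod_lt _ (by positivity)),
    Nat.mod_mod_of_dvd _ (dvd_mul_left _ _)]

theorem map_fst_rhoSub_append (k : ℕ) (p : List (ℕ × ℕ)) {i : ℕ} (hi : i < k * p.length) :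
    (rhoSub k p (i + 1) ++ [(rho k p).getD i (0, 0)]).map Prod.fst =
      (p.map Prod.fst).rotate ((i + 1) % p.length) := by
  set j := p.length
  have hj : 0 < j := Nat.pos_of_ne_zero (by rintro h; simp [h] at hi)
  have hk : 0 < k := Nat.pos_of_ne_zero (by rintro rfl; simp at hi)
  apply List.ext_getElem (by simp; omega)
  intro t h₁ h₂
  simp only [List.length_map, List.length_append, length_rhoSub, List.length_singleton] at h₁
  simp only [List.getElem_rotate, List.getElem_map, List.length_map]
  rw [← List.getD_eq_getElem p (0, 0)]
  rcases Nat.lt_or_ge t (j - 1) with ht | ht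
  · rw [List.getElem_append_left (by simpa using ht), getElem_rhoSub, fst_getD_rho_mod k p hk hj]
    congr 2
    obtain ⟨k', rfl⟩ : ∃ k', k = k' + 1 := ⟨k - 1, by omega⟩
    rw [show i + 1 + t + (k' + 1) * j - j = i + 1 + t + j * k' by ring_nf; omega,
      Nat.add_mul_mod_self_left, Nat.add_mod_mod, add_comm t]
  · rw [List.getElem_append_right (by simp; omega), List.getElem_singleton,
      getD_rho k p hi, Nat.add_mod_mod, show t + (i + 1) = i + j by omega, Nat.add_mod_right]

theorem exists_add_mod_eq {k c : ℕ} (a : ℕ) (hc : c < k) : ∃ s < k, (a + s) % k = c := by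
  refine ⟨(c + (k - 1) * a) % k, Nat.mod_lt _ (by omega), ?_⟩
  obtain ⟨k', rfl⟩ : ∃ k', k = k' + 1 := ⟨k - 1, by omega⟩
  rw [Nat.add_mod_mod, show a + (c + (k' + 1 - 1) * a) = c + (k' + 1) * a by simp; ring,
    Nat.add_mul_mod_self_left, Nat.mod_eq_of_lt hc]

theorem mem_rho {k : ℕ} {p : List (ℕ × ℕ)} {x : ℕ × ℕ} (hx : x.1 ∈ p.map Prod.fst)
    (hxk : x.2 < k) : x ∈ rho k p := by
  obtain ⟨y, hy, hyx⟩ := List.mem_map.mp hx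
  obtain ⟨s, hs, hsx⟩ := exists_add_mod_eq y.2 hxk
  simp only [rho, List.mem_flatMap, List.mem_reverse, List.mem_range, colShift, List.mem_map]
  exact ⟨s, hs, y, hy, Prod.ext hyx hsx⟩

theorem snd_getD_rho_lt {k : ℕ} (p : List (ℕ × ℕ)) {i : ℕ} (hi : i < k * p.length) :
    ((rho k p).getD i (0, 0)).2 < k := by
  rw [getD_rho k p hi]
  exact Nat.mod_lt _ (Nat.pos_of_ne_zero (by rintro rfl; simp at hi))

theorem perm_rhoSub_append (k : ℕ) (p : List (ℕ × ℕ)) {i : ℕ} (hi : i < k * p.length) :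
    ((rhoSub k p (i + 1)).map Prod.fst ++ [((rho k p).getD i (0, 0)).1]).Perm
      (p.map Prod.fst) := by
  have h := map_fst_rhoSub_append k p hi
  rw [List.map_append, List.map_singleton] at h
  exact h ▸ List.rotate_perm _ _

theorem RecAux_succ (k : ℕ) {j : ℕ} (hj : 1 ≤ j) {p : List (ℕ × ℕ)} (hp : p.length = j + 1) :
    RecAux k (j + 1) p = (List.range (k * (j + 1))).reverse.flatMap fun i =>
      (RecAux k j (rhoSub k p (i + 1))).map (· ++ [(rho k p).getD i (0, 0)]) := by
  rw [RecAux, if_neg (by omega), hp]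

theorem length_RecAux (k : ℕ) {j : ℕ} (hj : 1 ≤ j) {p : List (ℕ × ℕ)} (hp : p.length = j) :
    (RecAux k j p).length = k ^ j * j.factorial := by
  induction j, hj using Nat.le_induction generalizing p with
  | base => simp [RecAux, hp]
  | succ j hj ih =>
    have hblock (i : ℕ) : (RecAux k j (rhoSub k p i)).length = k ^ j * j.factorial :=
      ih (by simp [hp])
    simp only [RecAux_succ k hj hp, List.length_flatMap, List.length_map, hblock,
      List.map_const', List.length_reverse, List.length_range, List.sum_replicate, smul_eq_mul,
      Nat.factorial_succ, pow_succ]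
    ring

theorem mem_RecAux_one_iff {k : ℕ} {y : ℕ × ℕ} {q : List (ℕ × ℕ)} :
    q ∈ RecAux k 1 [y] ↔ (q.map Prod.fst).Perm [y.1] ∧ ∀ x ∈ q, x.2 < k := by
  simp only [RecAux, List.length_singleton, le_refl, if_true, List.mem_map, List.mem_range,
    colShift, List.map_singleton, List.perm_singleton, List.map_eq_singleton_iff]
  constructor
  · rintro ⟨s, hs, rfl⟩
    simp [Nat.mod_lt _ (Nat.zero_lt_of_lt hs)]
  · rintro ⟨⟨x, rfl, hx⟩, hxk⟩
    obtain ⟨s, hs, hsx⟩ := exists_add_mod_eq y.2 (hxk x (by simp))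
    exact ⟨s, hs, by simp [← hx, hsx]⟩

theorem mem_RecAux_iff {k : ℕ} {j : ℕ} (hj : 1 ≤ j) {p : List (ℕ × ℕ)}
    (hp : p.length = j) {q : List (ℕ × ℕ)} :
    q ∈ RecAux k j p ↔ (q.map Prod.fst).Perm (p.map Prod.fst) ∧ ∀ x ∈ q, x.2 < k := by
  induction j, hj using Nat.le_induction generalizing p q with
  | base =>
    obtain ⟨y, rfl⟩ := List.length_eq_one_iff.mp hp
    exact mem_RecAux_one_iff
  | succ j hj ih =>
    have hblock (i : ℕ) {q' : List (ℕ × ℕ)} := ih (p := rhoSub k p i) (q := q') (by simp [hp])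
    simp only [RecAux_succ k hj hp, List.mem_flatMap, List.mem_reverse, List.mem_range,
      List.mem_map, hblock]
    constructor
    · rintro ⟨i, hi, q', ⟨hperm, hcol⟩, rfl⟩
      rw [← hp] at hi
      refine ⟨?_, ?_⟩
      · rw [List.map_append, List.map_singleton]
        exact (hperm.append_right _).trans (perm_rhoSub_append k p hi)
      · simp only [List.mem_append, List.mem_singleton]
        rintro x (hx | rfl)
        exacts [hcol x hx, snd_getD_rho_lt p hi]
    · rintro ⟨hperm, hcol⟩
      obtain rfl | ⟨q', x, rfl⟩ := q.eq_nil_or_concat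
      · simp [← List.length_eq_zero_iff, hp] at hperm
      rw [List.concat_eq_append] at hperm hcol ⊢
      have hx : x ∈ rho k p := mem_rho (hperm.subset (by simp)) (hcol x (by simp))
      obtain ⟨i, hi, rfl⟩ := List.mem_iff_getElem.mp hx
      have hi' : i < k * p.length := by simpa using hi
      rw [← List.getD_eq_getElem _ (0, 0)] at hperm hcol ⊢
      refine ⟨i, hp ▸ hi', q', ⟨?_, fun y hy => hcol y (by simp [hy])⟩, rfl⟩
      rw [← List.perm_append_right_iff [((rho k p).getD i (0, 0)).1]]
      simpa using hperm.trans (perm_rhoSub_append k p hi').symm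

section Equivariance

variable {k : ℕ} {g : ℕ × ℕ → ℕ × ℕ}
  (hg : ∀ s x, g (x.1, (x.2 + s) % k) = ((g x).1, ((g x).2 + s) % k))
include hg

theorem colShift_map (s : ℕ) (p : List (ℕ × ℕ)) :
    colShift k s (p.map g) = (colShift k s p).map g := by
  simp [colShift, Function.comp_def, hg]

theorem rho_map (p : List (ℕ × ℕ)) : rho k (p.map g) = (rho k p).map g := by
  simp [rho, List.map_flatMap, colShift_map hg]

theorem rhoSub_map (hk : 0 < k) (p : List (ℕ × ℕ)) (i : ℕ) :
    rhoSub k (p.map g) i = (rhoSub k p i).map g := by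
  apply List.ext_getElem (by simp)
  intro t h₁ h₂
  have hp : 0 < p.length := by simp at h₂; omega
  have hT := Nat.mod_lt (i + t + k * p.length - p.length) (Nat.mul_pos hk hp)
  rw [List.getElem_map, getElem_rhoSub, getElem_rhoSub, List.length_map, rho_map hg,
    List.getD_eq_getElem _ _ (by simpa using hT), List.getD_eq_getElem _ _ (by simpa using hT),
    List.getElem_map]

theorem RecAux_map (hk : 0 < k) (fuel : ℕ) (p : List (ℕ × ℕ)) :
    RecAux k fuel (p.map g) = (RecAux k fuel p).map (List.map g) := by
  induction fuel generalizing p with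
  | zero => simp [RecAux, colShift_map hg]
  | succ fuel ih =>
    by_cases hp : p.length ≤ 1
    · simp [RecAux, hp, colShift_map hg]
    simp only [RecAux, List.length_map, if_neg hp, List.map_flatMap]
    refine List.flatMap_congr fun i hi => ?_
    have hi : i < (rho k p).length := by simpa using hi
    rw [rhoSub_map hg hk, ih, rho_map hg, List.getD_eq_getElem _ _ hi,
      List.getD_eq_getElem _ _ (by simpa using hi)]
    simp

end Equivariance

/-- `relabel n k (vₙ, cₙ) pᵢ = qᵢ` in the notation of the theorem. -/
def relabel (n k : ℕ) (y x : ℕ × ℕ) : ℕ × ℕ :=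
  ((x.1 + n - y.1) % n, if x.1 < y.1 then (x.2 + k - y.2) % k else (x.2 + k - y.2 - 1) % k)

theorem relabel_colShift {n k : ℕ} {y : ℕ × ℕ} (hy : y.2 < k) (s : ℕ) (x : ℕ × ℕ) :
    relabel n k y (x.1, (x.2 + s) % k) =
      ((relabel n k y x).1, ((relabel n k y x).2 + s) % k) := by
  have key : ∀ a b : ℕ, ((a + s) % k + b) % k = ((a + b) % k + s) % k := fun a b => by
    rw [Nat.mod_add_mod, Nat.mod_add_mod, add_right_comm]
  simp only [relabel]
  split_ifs
  · rw [Nat.add_sub_assoc hy.le, Nat.add_sub_assoc hy.le, key]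
  · have (a : ℕ) : a + k - y.2 - 1 = a + (k - y.2 - 1) := by omega
    rw [this, this, key]

theorem relabel_injOn {n k : ℕ} {y : ℕ × ℕ} (hy : y.1 ≤ n ∧ y.2 < k) :
    Set.InjOn (relabel n k y) {x | (1 ≤ x.1 ∧ x.1 ≤ n) ∧ x.2 < k} := by
  rintro ⟨u, c⟩ ⟨⟨hu₁, hu₂⟩, hc⟩ ⟨u', c'⟩ ⟨⟨hu₁', hu₂'⟩, hc'⟩ h
  simp only [relabel, Prod.mk.injEq] at h hu₁ hu₂ hc hu₁' hu₂' hc' ⊢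
  obtain ⟨hval, hcol⟩ := h
  have hu : u = u' := by
    have h₁ : u - 1 + (n + 1 - y.1) ≡ u' - 1 + (n + 1 - y.1) [MOD n] := by
      rwa [show u - 1 + (n + 1 - y.1) = u + n - y.1 by omega,
        show u' - 1 + (n + 1 - y.1) = u' + n - y.1 by omega]
    have := (Nat.ModEq.add_right_cancel' _ h₁).eq_of_lt_of_lt (by omega) (by omega)
    omega
  subst hu
  refine ⟨rfl, ?_⟩
  split_ifs at hcol
  · rw [Nat.add_sub_assoc hy.2.le, Nat.add_sub_assoc hy.2.le] at hcol
    exact (Nat.ModEq.add_right_cancel' _ hcol).eq_of_lt_of_lt hc hc'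
  · have (a : ℕ) : a + k - y.2 - 1 = a + (k - y.2 - 1) := by omega
    rw [this, this] at hcol
    exact (Nat.ModEq.add_right_cancel' _ hcol).eq_of_lt_of_lt hc hc'

@[simp] theorem length_idPerm (n : ℕ) : (idPerm n).length = n := by simp [idPerm]

theorem map_fst_idPerm (n : ℕ) : (idPerm n).map Prod.fst = (List.range n).map (· + 1) := by
  simp [idPerm]

theorem mem_map_fst_idPerm {n u : ℕ} : u ∈ (idPerm n).map Prod.fst ↔ 1 ≤ u ∧ u ≤ n := by
  simp only [map_fst_idPerm, List.mem_map, List.mem_range]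
  constructor
  · rintro ⟨i, hi, rfl⟩
    omega
  · exact fun hu => ⟨u - 1, by omega, by omega⟩

theorem getD_rho_idPerm {k n q r : ℕ} (hq : q < k) (hr : r < n) :
    (rho k (idPerm n)).getD (n * q + r) (0, 0) = (r + 1, k - 1 - q) := by
  have hlt := Nat.mul_add_lt_mul_of_lt_of_lt hq hr
  have hn : 0 < n := by omega
  rw [getD_rho k _ (by simpa using hlt), length_idPerm, Nat.mul_add_mod, Nat.mod_eq_of_lt hr,
    Nat.mul_add_div hn, Nat.div_eq_of_lt hr, Nat.add_zero,
    List.getD_eq_getElem _ _ (by simpa using hr)]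
  simp [idPerm, Nat.mod_eq_of_lt (show k - 1 - q < k by omega)]

theorem eq_of_getD_rho_idPerm_eq {k n i i' : ℕ} (hi : i < k * n) (hi' : i' < k * n)
    (h : (rho k (idPerm n)).getD i (0, 0) = (rho k (idPerm n)).getD i' (0, 0)) : i = i' := by
  have hn : 0 < n := Nat.pos_of_ne_zero (by rintro rfl; simp at hi)
  have hq {t} (ht : t < k * n) : t / n < k := Nat.div_lt_of_lt_mul (by rwa [mul_comm])
  rw [← Nat.div_add_mod i n, ← Nat.div_add_mod i' n,
    getD_rho_idPerm (hq hi) (Nat.mod_lt _ hn), getD_rho_idPerm (hq hi') (Nat.mod_lt _ hn),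
    Prod.mk.injEq] at h
  rw [← Nat.div_add_mod i n, ← Nat.div_add_mod i' n,
    show i / n = i' / n by have := hq hi; have := hq hi'; omega, show i % n = i' % n by omega]

/-- The window of `ρ(1⁰⋯n⁰)` before the symbol `v^c`, `c = k-1-a`, of block `a` reads
`(v+1)^{c+1} ⋯ n^{c+1} 1^c ⋯ (v-1)^c` (colours mod `k`). -/
theorem map_relabel_rhoSub_idPerm {k n a v : ℕ} (ha : a < k) (hv : 1 ≤ v) (hvn : v ≤ n) :
    (rhoSub k (idPerm n) (n * a + v)).map (relabel n k (v, k - 1 - a)) = idPerm (n - 1) := by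
  apply List.ext_getElem (by simp)
  intro t h₁ h₂
  simp only [List.length_map, length_rhoSub, length_idPerm] at h₁
  rw [List.getElem_map, getElem_rhoSub, length_idPerm,
    show (idPerm (n - 1))[t] = (t + 1, 0) by simp [idPerm]]
  have hentry {q r : ℕ} (hq : q < k) (hr : r < n)
      (h : n * a + v + t + k * n - n = n * q + r ∨
        n * a + v + t + k * n - n = k * n + (n * q + r)) :
      (rho k (idPerm n)).getD ((n * a + v + t + k * n - n) % (k * n)) (0, 0) =
        (r + 1, k - 1 - q) := by
    have hlt : n * q + r < k * n := Nat.mul_add_lt_mul_of_lt_of_lt hq hr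
    rcases h with h | h <;> rw [h]
    · rw [Nat.mod_eq_of_lt hlt, getD_rho_idPerm hq hr]
    · rw [Nat.add_mod_left, Nat.mod_eq_of_lt hlt, getD_rho_idPerm hq hr]
  simp only [relabel, Prod.mk.injEq]
  rcases Nat.lt_or_ge (v + t) n with hvt | hvt
  · have hval : (v + t + 1 + n - v) % n = t + 1 := by
      rw [show v + t + 1 + n - v = t + 1 + n by omega, Nat.add_mod_right,
        Nat.mod_eq_of_lt (by omega)]
    rcases a with _ | a
    · have hkn : n * (k - 1) + n = k * n := by
        rw [← Nat.mul_succ, Nat.succ_eq_add_one, Nat.sub_add_cancel ha, mul_comm]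
      rw [hentry (q := k - 1) (by omega) hvt (Or.inl (by omega))]
      simp [hval, show ¬v + t + 1 < v by omega, show k - (k - 1) - 1 = 0 by omega]
    · rw [hentry (q := a) (by omega) hvt (Or.inr (by rw [Nat.mul_succ]; omega))]
      simp [hval, show ¬v + t + 1 < v by omega, show k - 1 - a + k - (k - 1 - (a + 1)) - 1 = k
        by omega]
  · rw [hentry (q := a) (r := v + t - n) ha (by omega) (Or.inr (by omega))]
    simp [show v + t - n + 1 < v by omega, show k - 1 - a + k - (k - 1 - a) = k by omega,
      show v + t - n + 1 + n - v = t + 1 by omega, Nat.mod_eq_of_lt (show t + 1 < n by omega)]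

theorem rankL_one {k c : ℕ} (hc : c < k) : rankL k 1 [(1, c)] = c + 1 := by
  have hlist : RecList k (idPerm 1) = (List.range k).map fun s => [(1, s)] := by
    simp +contextual [RecList, RecAux, idPerm, colShift, Nat.mod_eq_of_lt]
  have hnodup : ((List.range k).map fun s => [((1 : ℕ), s)]).Nodup :=
    List.nodup_range.map fun _ _ h => by simpa using h
  have := hnodup.idxOf_getElem c (by simpa using hc)
  simp_all [rankL]

theorem IsCPerm.bounds {n k : ℕ} {p : List (ℕ × ℕ)} (h : IsCPerm n k p) {x : ℕ × ℕ}
    (hx : x ∈ p) : (1 ≤ x.1 ∧ x.1 ≤ n) ∧ x.2 < k :=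
  ⟨mem_map_fst_idPerm.mp (map_fst_idPerm n ▸ h.1.subset (List.mem_map_of_mem hx)), h.2 x hx⟩

section Window

variable {k m a v : ℕ} (ha : a < k) (hv : 1 ≤ v) (hvm : v ≤ m + 1)
include ha hv hvm

theorem perm_rhoSub_idPerm :
    ((rhoSub k (idPerm (m + 1)) ((m + 1) * a + v)).map Prod.fst ++ [v]).Perm
      ((idPerm (m + 1)).map Prod.fst) := by
  have h := perm_rhoSub_append k (idPerm (m + 1)) (i := (m + 1) * a + (v - 1))
    (by simpa using Nat.mul_add_lt_mul_of_lt_of_lt ha (by omega))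
  rwa [getD_rho_idPerm ha (by omega), Nat.sub_add_cancel hv, add_assoc,
    Nat.sub_add_cancel hv] at h

variable (hm : 1 ≤ m) {σ : List (ℕ × ℕ)} (hσ : IsCPerm (m + 1) k (σ ++ [(v, k - 1 - a)]))
include hm hσ

theorem mem_RecAux_rhoSub_idPerm :
    σ ∈ RecAux k m (rhoSub k (idPerm (m + 1)) ((m + 1) * a + v)) := by
  rw [mem_RecAux_iff hm (by simp)]
  refine ⟨?_, fun x hx => hσ.2 x (List.mem_append_left _ hx)⟩
  rw [← List.perm_append_right_iff [v]]
  simpa using hσ.1.trans ((map_fst_idPerm _).symm ▸ (perm_rhoSub_idPerm ha hv hvm).symm)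

theorem idxOf_RecAux_rhoSub_idPerm :
    (RecAux k m (rhoSub k (idPerm (m + 1)) ((m + 1) * a + v))).idxOf σ =
      (RecAux k m (idPerm m)).idxOf (σ.map (relabel (m + 1) k (v, k - 1 - a))) := by
  set W := rhoSub k (idPerm (m + 1)) ((m + 1) * a + v)
  have hW : W.map (relabel (m + 1) k (v, k - 1 - a)) = idPerm m :=
    map_relabel_rhoSub_idPerm ha hv hvm
  have hRecW {q} (hq : q ∈ RecAux k m W) (x) (hx : x ∈ q) :
      (1 ≤ x.1 ∧ x.1 ≤ m + 1) ∧ x.2 < k := by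
    obtain ⟨hqW, hqk⟩ := (mem_RecAux_iff hm (by simp [W])).mp hq
    refine ⟨mem_map_fst_idPerm.mp ((perm_rhoSub_idPerm ha hv hvm).subset ?_), hqk x hx⟩
    exact List.mem_append_left _ (hqW.subset (List.mem_map_of_mem hx))
  rw [← hW, RecAux_map (relabel_colShift (by simp; omega)) (by omega),
    List.idxOf_map_of_injOn (List.injOn_map (relabel_injOn ⟨hvm, by simp; omega⟩))
      (fun _ hq => hRecW hq) (fun _ hx => hσ.bounds (List.mem_append_left _ hx))]

end Window

theorem rankL_snoc {k m : ℕ} (hm : 1 ≤ m) {σ : List (ℕ × ℕ)} {y : ℕ × ℕ}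
    (hσ : IsCPerm (m + 1) k (σ ++ [y])) :
    rankL k (m + 1) (σ ++ [y]) =
      ((m + 1) * (y.2 + 1) - y.1) * (k ^ m * m.factorial) +
        rankL k m (σ.map (relabel (m + 1) k y)) := by
  obtain ⟨⟨hv, hvm⟩, hc⟩ := hσ.bounds (List.mem_append_right σ (List.mem_singleton_self y))
  obtain ⟨v, c⟩ := y
  obtain ⟨a, ha, rfl⟩ : ∃ a < k, c = k - 1 - a := ⟨k - 1 - c, by omega, by omega⟩
  dsimp only at hv hvm ⊢
  set i₀ := (m + 1) * a + (v - 1)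
  have hi₀ : i₀ < k * (m + 1) := Nat.mul_add_lt_mul_of_lt_of_lt ha (by omega)
  have hr : (rho k (idPerm (m + 1))).getD i₀ (0, 0) = (v, k - 1 - a) := by
    rw [getD_rho_idPerm ha (by omega), Nat.sub_add_cancel hv]
  have hσW : σ ∈ RecAux k m (rhoSub k (idPerm (m + 1)) (i₀ + 1)) := by
    rw [show i₀ + 1 = (m + 1) * a + v by omega]
    exact mem_RecAux_rhoSub_idPerm ha hv hvm hm hσ
  have hlast {i} (hi : i < k * (m + 1)) (hmem : σ ++ [(v, k - 1 - a)] ∈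
      (RecAux k m (rhoSub k (idPerm (m + 1)) (i + 1))).map
        (· ++ [(rho k (idPerm (m + 1))).getD i (0, 0)])) : i = i₀ := by
    obtain ⟨q, -, hq⟩ := List.mem_map.mp hmem
    have h := (List.append_inj' hq rfl).2
    simp only [List.cons.injEq, and_true] at h
    exact eq_of_getD_rho_idPerm_eq hi hi₀ (h.trans hr.symm)
  rw [rankL, rankL, RecList, RecList, length_idPerm, length_idPerm,
    RecAux_succ k hm (length_idPerm _),
    List.idxOf_flatMap_range_reverse (ℓ := k ^ m * m.factorial)
      (fun i _ => by rw [List.length_map, length_RecAux k hm (by simp)]) hi₀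
      (List.mem_map.mpr ⟨σ, hσW, by rw [hr]⟩) (fun i hi => hlast hi),
    hr, List.idxOf_map_of_injOn (List.append_left_injective _).injOn (s := Set.univ) (by simp)
      (by simp),
    show i₀ + 1 = (m + 1) * a + v by omega, idxOf_RecAux_rhoSub_idPerm ha hv hvm hm hσ]
  have hkm : k * (m + 1) = (m + 1) * a + (m + 1) * (k - 1 - a + 1) := by
    rw [← mul_add, mul_comm]; congr 1; omega
  rw [show k * (m + 1) - 1 - i₀ = (m + 1) * (k - 1 - a + 1) - v by omega, add_assoc]

theorem rank_recursion_general (n k : ℕ) (hn : 2 ≤ n)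
    (π : List (ℕ × ℕ)) (hπ : IsCPerm n k π) :
    (∀ c < k, rankL k 1 [(1, c)] = c + 1) ∧
    rankL k n π =
      (n * ((π.getD (n - 1) (0, 0)).2 + 1) - (π.getD (n - 1) (0, 0)).1) *
          (k ^ (n - 1) * (n - 1).factorial) +
        rankL k (n - 1) ((π.take (n - 1)).map (fun x =>
          ((x.1 + n - (π.getD (n - 1) (0, 0)).1) % n,
            if x.1 < (π.getD (n - 1) (0, 0)).1 then
              (x.2 + k - (π.getD (n - 1) (0, 0)).2) % k
            else (x.2 + k - (π.getD (n - 1) (0, 0)).2 - 1) % k))) := by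
  refine ⟨fun c hc => rankL_one hc, ?_⟩
  obtain ⟨m, rfl⟩ : ∃ m, n = m + 1 := ⟨n - 1, by omega⟩
  have hlen : π.length = m + 1 := by simpa using hπ.1.length_eq
  have hm : m < π.length := by omega
  have hsplit : π = π.take m ++ [π.getD m (0, 0)] := by
    rw [List.getD_eq_getElem _ _ hm, ← List.take_succ_eq_append_getElem hm,
      List.take_of_length_le (by omega)]
  rw [hsplit] at hπ
  rw [Nat.add_sub_cancel]
  conv_lhs => rw [hsplit]
  exact rankL_snoc (by omega) hπ

/-- For `n ≥ 2`, `k ≥ 1` and `π = p₁⋯pₙ ∈ CPERMS(n,k)` with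
`pᵢ = vᵢ^{cᵢ}`, the rank of `π` in `Rec(1⁰2⁰⋯n⁰,k)` satisfies the recursion
`RANK_n(π) = (n(cₙ+1) - vₙ)·k^{n-1}·(n-1)! + RANK_{n-1}(q₁⋯q_{n-1})`, where
`v'ᵢ = (vᵢ - vₙ) mod n`, and `c'ᵢ = (cᵢ - cₙ) mod k` if `vᵢ < vₙ`, and
`c'ᵢ = (cᵢ - cₙ - 1) mod k` if `vᵢ > vₙ`; the base case is `RANK₁(1^c) = c + 1`. -/
theorem rank_recursion (n k : ℕ) (hn : 2 ≤ n) (hk : 1 ≤ k)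
    (π : List (ℕ × ℕ)) (hπ : IsCPerm n k π) :
    (∀ c < k, rankL k 1 [(1, c)] = c + 1) ∧
    rankL k n π =
      (n * ((π.getD (n - 1) (0, 0)).2 + 1) - (π.getD (n - 1) (0, 0)).1) *
          (k ^ (n - 1) * (n - 1).factorial) +
        rankL k (n - 1) ((π.take (n - 1)).map (fun x =>
          ((x.1 + n - (π.getD (n - 1) (0, 0)).1) % n,
            if x.1 < (π.getD (n - 1) (0, 0)).1 then
              (x.2 + k - (π.getD (n - 1) (0, 0)).2) % k
            else (x.2 + k - (π.getD (n - 1) (0, 0)).2 - 1) % k))) :=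
  rank_recursion_general n k hn π hπ
end
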